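/- Warnaar's positivity-preserving transformation: for all natural numbers L and integers a, Σ_{k≥0} W_{L,k}(q) [2k choose k-a]_q = q^(2a²) [2L choose L-2a]_q, where W_{L,k}(q) = Σ_{m=0}^{L} q^((m+k)²+k²) [L choose m]_q [L-m choose 2k]_q. -/
import Mathlib


open LaurentPolynomial Finset

noncomputable section

/-- Gaussian binomial coefficient with natural indices, in base `x`, defined by the
`q`-Pascal recurrence `[n+1, k+1] = [n, k] + x^(k+1) * [n, k+1]`.  It vanishes for `k > n`. -/
def gaussAux (x : LaurentPolynomial ℤ) : ℕ → ℕ → LaurentPolynomial ℤ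
  | _, 0 => 1
  | 0, _ + 1 => 0
  | n + 1, k + 1 => gaussAux x n k + x ^ (k + 1) * gaussAux x n (k + 1)

/-- The Gaussian binomial coefficient `[n choose k]` in base `x`, for integer indices:
it is zero when `n < 0` or `k < 0` (and, by `gaussAux`, also when `k > n`). -/
def qbin (x : LaurentPolynomial ℤ) (n k : ℤ) : LaurentPolynomial ℤ :=
  if 0 ≤ n ∧ 0 ≤ k then gaussAux x n.toNat k.toNat else 0

/-- `(-1)^j` for an integer `j`, as a Laurent polynomial. -/
def m1 (j : ℤ) : LaurentPolynomial ℤ := ((((-1 : ℤˣ) ^ j : ℤˣ) : ℤ) : LaurentPolynomial ℤ)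

variable {x : LaurentPolynomial ℤ}

lemma gaussAux_zero_right (n : ℕ) : gaussAux x n 0 = 1 := by cases n <;> rfl

lemma gaussAux_succ (n k : ℕ) :
    gaussAux x (n + 1) (k + 1) = gaussAux x n k + x ^ (k + 1) * gaussAux x n (k + 1) := rfl

lemma gaussAux_eq_zero_of_lt : ∀ {n k : ℕ}, n < k → gaussAux x n k = 0 := by
  intro n
  induction n with
  | zero => intro k hk; obtain ⟨k, rfl⟩ := Nat.exists_eq_add_of_lt hk; rfl
  | succ n ih =>
    intro k hk
    obtain ⟨k, rfl⟩ : ∃ m, k = m + 1 := ⟨k - 1, by omega⟩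
    rw [gaussAux_succ, ih (by omega), ih (by omega), mul_zero, add_zero]

lemma gaussAux_self (n : ℕ) : gaussAux x n n = 1 := by
  induction n with
  | zero => rfl
  | succ n ih => rw [gaussAux_succ, ih, gaussAux_eq_zero_of_lt (by omega), mul_zero, add_zero]

lemma qbin_natCast (n k : ℕ) : qbin x n k = gaussAux x n k := by
  simp [qbin, Int.toNat_natCast]

lemma qbin_neg_right {n k : ℤ} (hk : k < 0) : qbin x n k = 0 := by
  rw [qbin, if_neg]; rintro ⟨-, h⟩; omega

lemma qbin_neg_left {n k : ℤ} (hn : n < 0) : qbin x n k = 0 := by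
  rw [qbin, if_neg]; rintro ⟨h, -⟩; omega

lemma qbin_eq_zero_of_lt {n k : ℤ} (h : n < k) : qbin x n k = 0 := by
  rcases lt_or_ge n 0 with hn | hn
  · exact qbin_neg_left hn
  · rcases lt_or_ge k 0 with hk | hk
    · exact qbin_neg_right hk
    · rw [qbin, if_pos ⟨hn, hk⟩, gaussAux_eq_zero_of_lt (by omega)]

lemma qbin_zero_right {n : ℤ} (hn : 0 ≤ n) : qbin x n 0 = 1 := by
  rw [qbin, if_pos ⟨hn, le_refl 0⟩, Int.toNat_zero, gaussAux_zero_right]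

lemma qbin_self {n : ℤ} (hn : 0 ≤ n) : qbin x n n = 1 := by
  rw [qbin, if_pos ⟨hn, hn⟩, gaussAux_self]

lemma qbin_zero_left (k : ℤ) : qbin x 0 k = if k = 0 then 1 else 0 := by
  split_ifs with h
  · subst h; exact qbin_zero_right le_rfl
  · rcases lt_or_gt_of_ne h with h' | h'
    · exact qbin_neg_right h'
    · exact qbin_eq_zero_of_lt h'

/-- Pascal recurrence with integer lower index, for `x = T 1`. -/
lemma qbin_pascal (n : ℕ) (k : ℤ) :
    qbin (T 1) (n + 1 : ℕ) k = qbin (T 1) n (k - 1) + T k * qbin (T 1) n k := by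
  rcases lt_trichotomy k 0 with hk | hk | hk
  · rw [qbin_neg_right hk, qbin_neg_right (by omega), qbin_neg_right hk, mul_zero, add_zero]
  · subst hk
    rw [qbin_zero_right (by positivity), qbin_neg_right (by omega), qbin_zero_right (by positivity),
      T_zero, one_mul, zero_add]
  · lift k to ℕ using hk.le with k'
    obtain ⟨k, rfl⟩ : ∃ m, k' = m + 1 := ⟨k' - 1, by omega⟩
    push_cast
    rw [show ((k : ℤ) + 1 - 1) = (k : ℕ) by push_cast; ring]
    rw [show ((n : ℤ) + 1) = ((n + 1 : ℕ) : ℤ) by push_cast; ring]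
    rw [show ((k : ℤ) + 1) = ((k + 1 : ℕ) : ℤ) by push_cast; ring]
    rw [qbin_natCast, qbin_natCast, qbin_natCast, gaussAux_succ]
    congr 1
    congr 1
    rw [T_pow, mul_one]

-- q-factorials and the factorization of Gaussian binomials
def pG (j : ℕ) : Polynomial ℤ := ∑ i ∈ Finset.range j, Polynomial.X ^ i

def pfac : ℕ → Polynomial ℤ
  | 0 => 1
  | n + 1 => pfac n * pG (n + 1)

lemma pG_eval_one (j : ℕ) : (pG j).eval 1 = j := by
  simp [pG, Polynomial.eval_finset_sum]

lemma pfac_eval_one (n : ℕ) : (pfac n).eval 1 = (n.factorial : ℤ) := by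
  induction n with
  | zero => simp [pfac]
  | succ n ih => rw [pfac, Polynomial.eval_mul, ih, pG_eval_one, Nat.factorial_succ]; push_cast; ring

lemma pfac_ne_zero (n : ℕ) : pfac n ≠ 0 := by
  intro h
  have h2 := pfac_eval_one n
  rw [h] at h2
  simp only [Polynomial.eval_zero] at h2
  exact (Nat.cast_ne_zero.mpr (Nat.factorial_ne_zero n)) h2.symm

def qG (j : ℕ) : LaurentPolynomial ℤ := ∑ i ∈ Finset.range j, T (i : ℤ)

def qfac (n : ℕ) : LaurentPolynomial ℤ := Polynomial.toLaurent (pfac n)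

lemma qG_eq (j : ℕ) : qG j = Polynomial.toLaurent (pG j) := by
  simp [qG, pG, map_sum, Polynomial.toLaurent_X_pow]

lemma qfac_zero : qfac 0 = 1 := by simp [qfac, pfac]

lemma qfac_succ (n : ℕ) : qfac (n + 1) = qfac n * qG (n + 1) := by
  rw [qfac, pfac, map_mul, qG_eq, qfac]

lemma qfac_ne_zero (n : ℕ) : qfac n ≠ 0 :=
  Polynomial.toLaurent_ne_zero.mpr (pfac_ne_zero n)

lemma qG_split (a b : ℕ) : qG (a + b) = qG a + T (a : ℤ) * qG b := by
  rw [qG, Finset.sum_range_add, qG, qG, Finset.mul_sum]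
  congr 1
  refine Finset.sum_congr rfl fun i _ => ?_
  rw [← T_add]
  push_cast
  ring

lemma fact_aux : ∀ n k : ℕ, k ≤ n → gaussAux (T 1) n k * (qfac k * qfac (n - k)) = qfac n := by
  intro n
  induction n with
  | zero =>
    intro k hk
    interval_cases k
    simp [gaussAux, qfac_zero]
  | succ n ih =>
    intro k hk
    match k with
    | 0 => simp [gaussAux_zero_right, qfac_zero]
    | k + 1 =>
      rcases Nat.lt_or_ge k n with hkn | hkn
      · obtain ⟨p, rfl⟩ : ∃ p, n = k + 1 + p := ⟨n - k - 1, by omega⟩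
        have e1 : k + 1 + p + 1 - (k + 1) = p + 1 := by omega
        have e2 : k + 1 + p - k = p + 1 := by omega
        have e3 : k + 1 + p - (k + 1) = p := by omega
        rw [gaussAux_succ, e1, qfac_succ k, qfac_succ p, add_mul]
        have ih1 : gaussAux (T 1) (k + 1 + p) k * (qfac k * qfac (p + 1)) = qfac (k + 1 + p) := by
          have h := ih k (by omega); rwa [e2] at h
        have ih2 : gaussAux (T 1) (k + 1 + p) (k + 1) * (qfac (k + 1) * qfac p) =
            qfac (k + 1 + p) := by
          have h := ih (k + 1) (by omega); rwa [e3] at h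
        have hsplit : qG (k + 1) + T ((k : ℤ) + 1) * qG (p + 1) = qG (k + 1 + p + 1) := by
          have h := qG_split (k + 1) (p + 1)
          push_cast at h
          rw [show k + 1 + p + 1 = k + 1 + (p + 1) by ring]
          exact h.symm
        calc gaussAux (T 1) (k + 1 + p) k * (qfac k * qG (k + 1) * (qfac p * qG (p + 1))) +
              T 1 ^ (k + 1) * gaussAux (T 1) (k + 1 + p) (k + 1) *
                (qfac k * qG (k + 1) * (qfac p * qG (p + 1)))
            = (gaussAux (T 1) (k + 1 + p) k * (qfac k * (qfac p * qG (p + 1)))) * qG (k + 1) +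
              (T ((k : ℤ) + 1) * qG (p + 1)) *
                (gaussAux (T 1) (k + 1 + p) (k + 1) * ((qfac k * qG (k + 1)) * qfac p)) := by
              rw [T_pow, mul_one]
              push_cast
              ring
          _ = qfac (k + 1 + p) * (qG (k + 1) + T ((k : ℤ) + 1) * qG (p + 1)) := by
              rw [show qfac k * qfac (p + 1) = qfac k * (qfac p * qG (p + 1)) by
                    rw [qfac_succ]] at ih1
              rw [show qfac (k + 1) * qfac p = (qfac k * qG (k + 1)) * qfac p by
                    rw [qfac_succ]] at ih2
              rw [ih1, ih2]; ring
          _ = qfac (k + 1 + p + 1) := by rw [hsplit, qfac_succ]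
      · have hk2 : k = n := by omega
        subst hk2
        simp [gaussAux_self, qfac_zero, qfac_succ]

-- Factorization of qbin and product identities
lemma qbin_fac {n k : ℤ} (h0 : 0 ≤ k) (h1 : k ≤ n) :
    qbin (T 1) n k * (qfac k.toNat * qfac (n - k).toNat) = qfac n.toNat := by
  have h2 : (0:ℤ) ≤ n := le_trans h0 h1
  lift k to ℕ using h0 with k'
  lift n to ℕ using h2 with n'
  have e : ((n' : ℤ) - k').toNat = n' - k' := by omega
  rw [e, qbin_natCast, Int.toNat_natCast, Int.toNat_natCast]
  exact fact_aux n' k' (by exact_mod_cast h1)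

lemma qbin_swap (n i j : ℤ) :
    qbin (T 1) n i * qbin (T 1) (n - i) j = qbin (T 1) n j * qbin (T 1) (n - j) i := by
  by_cases h : 0 ≤ i ∧ 0 ≤ j ∧ i + j ≤ n
  · obtain ⟨hi, hj, hij⟩ := h
    apply mul_right_cancel₀ (b := qfac i.toNat * qfac j.toNat * qfac (n - i - j).toNat)
      (mul_ne_zero (mul_ne_zero (qfac_ne_zero _) (qfac_ne_zero _)) (qfac_ne_zero _))
    have A1 : qbin (T 1) (n - i) j * (qfac j.toNat * qfac (n - i - j).toNat) =
        qfac (n - i).toNat := qbin_fac hj (by omega)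
    have A2 : qbin (T 1) n i * (qfac i.toNat * qfac (n - i).toNat) = qfac n.toNat :=
      qbin_fac hi (by omega)
    have B1 : qbin (T 1) (n - j) i * (qfac i.toNat * qfac (n - j - i).toNat) =
        qfac (n - j).toNat := qbin_fac hi (by omega)
    have B2 : qbin (T 1) n j * (qfac j.toNat * qfac (n - j).toNat) = qfac n.toNat :=
      qbin_fac hj (by omega)
    calc qbin (T 1) n i * qbin (T 1) (n - i) j *
          (qfac i.toNat * qfac j.toNat * qfac (n - i - j).toNat)
        = qbin (T 1) n i * qfac i.toNat *
            (qbin (T 1) (n - i) j * (qfac j.toNat * qfac (n - i - j).toNat)) := by ring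
      _ = qfac n.toNat := by rw [A1, ← A2]; ring
      _ = qbin (T 1) n j * qfac j.toNat *
            (qbin (T 1) (n - j) i * (qfac i.toNat * qfac (n - j - i).toNat)) := by
          rw [B1, ← B2]; ring
      _ = qbin (T 1) n j * qbin (T 1) (n - j) i *
            (qfac i.toNat * qfac j.toNat * qfac (n - i - j).toNat) := by
          rw [show n - j - i = n - i - j from by ring]; ring
  · have hz : ∀ i' j' : ℤ, (i' < 0 ∨ j' < 0 ∨ n < i' + j') →
        qbin (T 1) n i' * qbin (T 1) (n - i') j' = 0 := by
      rintro i' j' (hc | hc | hc)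
      · rw [qbin_neg_right hc, zero_mul]
      · rw [qbin_neg_right hc, mul_zero]
      · rw [qbin_eq_zero_of_lt (show n - i' < j' from by omega), mul_zero]
    have hc : i < 0 ∨ j < 0 ∨ n < i + j := by
      by_contra hc; push_neg at hc; exact h ⟨by omega, by omega, by omega⟩
    rw [hz i j hc, hz j i (by omega)]

lemma qbin_chain (n c d : ℤ) :
    qbin (T 1) n c * qbin (T 1) c d = qbin (T 1) n d * qbin (T 1) (n - d) (c - d) := by
  by_cases h : 0 ≤ d ∧ d ≤ c ∧ c ≤ n
  · obtain ⟨hd, hdc, hcn⟩ := h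
    apply mul_right_cancel₀ (b := qfac d.toNat * qfac (c - d).toNat * qfac (n - c).toNat)
      (mul_ne_zero (mul_ne_zero (qfac_ne_zero _) (qfac_ne_zero _)) (qfac_ne_zero _))
    have A1 : qbin (T 1) c d * (qfac d.toNat * qfac (c - d).toNat) = qfac c.toNat :=
      qbin_fac hd hdc
    have A2 : qbin (T 1) n c * (qfac c.toNat * qfac (n - c).toNat) = qfac n.toNat :=
      qbin_fac (by omega) hcn
    have B1 : qbin (T 1) (n - d) (c - d) * (qfac (c - d).toNat * qfac (n - d - (c - d)).toNat) =
        qfac (n - d).toNat := qbin_fac (by omega) (by omega)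
    have B2 : qbin (T 1) n d * (qfac d.toNat * qfac (n - d).toNat) = qfac n.toNat :=
      qbin_fac hd (by omega)
    have e : n - d - (c - d) = n - c := by ring
    rw [e] at B1
    calc qbin (T 1) n c * qbin (T 1) c d *
          (qfac d.toNat * qfac (c - d).toNat * qfac (n - c).toNat)
        = qbin (T 1) c d * (qfac d.toNat * qfac (c - d).toNat) * qbin (T 1) n c *
            qfac (n - c).toNat := by ring
      _ = qfac n.toNat := by rw [A1, ← A2]; ring
      _ = qbin (T 1) n d * (qfac d.toNat * qfac (n - d).toNat) := B2.symm
      _ = qbin (T 1) n d * qbin (T 1) (n - d) (c - d) *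
            (qfac d.toNat * qfac (c - d).toNat * qfac (n - c).toNat) := by
          rw [← B1]; ring
  · have hc : d < 0 ∨ c < d ∨ n < c := by
      by_contra hc; push_neg at hc; exact h ⟨by omega, by omega, by omega⟩
    rcases hc with hc | hc | hc
    · rw [qbin_neg_right hc, mul_zero, qbin_neg_right hc, zero_mul]
    · rw [qbin_eq_zero_of_lt hc, mul_zero,
        qbin_neg_right (show c - d < 0 from by omega), mul_zero]
    · rw [qbin_eq_zero_of_lt hc, zero_mul,
        qbin_eq_zero_of_lt (show n - d < c - d from by omega), mul_zero]

lemma qbin_symm {n : ℤ} (hn : 0 ≤ n) (k : ℤ) : qbin (T 1) n k = qbin (T 1) n (n - k) := by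
  by_cases h : 0 ≤ k ∧ k ≤ n
  · obtain ⟨hk, hkn⟩ := h
    apply mul_right_cancel₀ (b := qfac k.toNat * qfac (n - k).toNat)
      (mul_ne_zero (qfac_ne_zero _) (qfac_ne_zero _))
    rw [qbin_fac hk hkn]
    have B : qbin (T 1) n (n - k) * (qfac (n - k).toNat * qfac (n - (n - k)).toNat) =
        qfac n.toNat := qbin_fac (by omega) (by omega)
    rw [show n - (n - k) = k from by ring] at B
    rw [← B]; ring
  · have hc : k < 0 ∨ n < k := by by_contra hc; push_neg at hc; exact h ⟨by omega, by omega⟩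
    rcases hc with hc | hc
    · rw [qbin_neg_right hc, qbin_eq_zero_of_lt (show n < n - k from by omega)]
    · rw [qbin_eq_zero_of_lt hc, qbin_neg_right (show n - k < 0 from by omega)]

lemma chain_cyc (n α β γ : ℤ) :
    qbin (T 1) n α * qbin (T 1) (n - α) β * qbin (T 1) (n - α - β) γ =
    qbin (T 1) n β * qbin (T 1) (n - β) γ * qbin (T 1) (n - β - γ) α := by
  rw [qbin_swap n α β, show n - α - β = n - β - α from by ring, mul_assoc,
    qbin_swap (n - β) α γ, ← mul_assoc]

lemma P1 (l m k aa : ℤ) :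
    qbin (T 1) l m * qbin (T 1) (l - m) (2 * k) * qbin (T 1) (2 * k) (k - aa) =
    qbin (T 1) l (k - aa) * qbin (T 1) (l - k + aa) (k + aa) * qbin (T 1) (l - 2 * k) m := by
  rw [mul_assoc, qbin_chain (l - m) (2 * k) (k - aa),
    show 2 * k - (k - aa) = k + aa from by ring, ← mul_assoc,
    show l - m - (k - aa) = l - m - (k - aa) from rfl]
  have h := chain_cyc l m (k - aa) (k + aa)
  rw [show l - m - (k - aa) = l - m - (k - aa) from rfl] at h
  rw [h, show l - (k - aa) - (k + aa) = l - 2 * k from by ring,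
    show l - (k - aa) = l - k + aa from by ring]

lemma P2 (l j k aa : ℤ) :
    qbin (T 1) l (k - aa) * qbin (T 1) (l - k + aa) (k + aa) * qbin (T 1) (l - 2 * k) (j - k) =
    qbin (T 1) l (j - aa) * qbin (T 1) (j - aa) (j - k) * qbin (T 1) (l - j + aa) (k + aa) := by
  have hR : qbin (T 1) l (j - aa) * qbin (T 1) (j - aa) (j - k) * qbin (T 1) (l - j + aa) (k + aa)
      = qbin (T 1) l (j - k) * qbin (T 1) (l - (j - k)) (k - aa) *
        qbin (T 1) (l - (j - k) - (k - aa)) (k + aa) := by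
    rw [qbin_chain l (j - aa) (j - k), show (j - aa) - (j - k) = k - aa from by ring,
      show l - (j - k) - (k - aa) = l - j + aa from by ring]
  rw [hR]
  have h := chain_cyc l (j - k) (k - aa) (k + aa)
  rw [h, show l - (k - aa) - (k + aa) = l - 2 * k from by ring,
    show l - (k - aa) = l - k + aa from by ring]

-- Summation helpers
lemma sum_ext_zero {f : ℤ → LaurentPolynomial ℤ} {A B : Finset ℤ}
    (hA : ∀ x ∈ A, x ∉ B → f x = 0) (hB : ∀ x ∈ B, x ∉ A → f x = 0) :
    ∑ x ∈ A, f x = ∑ x ∈ B, f x := by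
  have h1 : ∑ x ∈ A, f x = ∑ x ∈ A ∪ B, f x :=
    Finset.sum_subset Finset.subset_union_left
      (fun x hx hxA => hB x ((Finset.mem_union.mp hx).resolve_left hxA) hxA)
  have h2 : ∑ x ∈ B, f x = ∑ x ∈ A ∪ B, f x :=
    Finset.sum_subset Finset.subset_union_right
      (fun x hx hxB => hA x ((Finset.mem_union.mp hx).resolve_right hxB) hxB)
  rw [h1, h2]

lemma sum_shift (f : ℤ → LaurentPolynomial ℤ) (lo hi c : ℤ) :
    ∑ x ∈ Finset.Icc lo hi, f x = ∑ x ∈ Finset.Icc (lo - c) (hi - c), f (x + c) := by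
  rw [show Finset.Icc lo hi = (Finset.Icc (lo - c) (hi - c)).map (addRightEmbedding c) by
      rw [Finset.map_add_right_Icc]; congr 1 <;> ring]
  rw [Finset.sum_map]
  rfl

/-- The `q`-Vandermonde identity. -/
lemma vand (m n : ℕ) (k : ℤ) :
    ∑ j ∈ Finset.Icc (0 : ℤ) (n : ℤ),
        T (j * (j + (m : ℤ) - k)) * (qbin (T 1) m (k - j) * qbin (T 1) n j) =
      qbin (T 1) ((m : ℤ) + (n : ℤ)) k := by
  induction m generalizing k with
  | zero =>
    have h1 : ∀ j ∈ Finset.Icc (0 : ℤ) (n : ℤ),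
        T (j * (j + ((0 : ℕ) : ℤ) - k)) * (qbin (T 1) (0 : ℕ) (k - j) * qbin (T 1) n j) =
        if j = k then qbin (T 1) n j else 0 := by
      intro j _
      rw [show ((0 : ℕ) : ℤ) = 0 by norm_num, qbin_zero_left (k - j)]
      by_cases hjk : j = k
      · subst hjk
        rw [if_pos (show j - j = 0 by ring), show j * (j + 0 - j) = 0 by ring, T_zero,
          if_pos rfl]
        ring
      · rw [if_neg (by omega), if_neg hjk]
        ring
    rw [Finset.sum_congr rfl h1, Finset.sum_ite_eq' (Finset.Icc (0 : ℤ) (n : ℤ)) k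
      (fun j => qbin (T 1) n j)]
    rw [show ((0 : ℕ) : ℤ) + (n : ℤ) = (n : ℤ) by norm_num]
    split_ifs with h
    · rfl
    · rw [Finset.mem_Icc] at h
      push_neg at h
      rcases lt_or_ge k 0 with hk | hk
      · exact (qbin_neg_right hk).symm
      · exact (qbin_eq_zero_of_lt (h hk)).symm
  | succ m ih =>
    have hsplit : ∀ j ∈ Finset.Icc (0 : ℤ) (n : ℤ),
        T (j * (j + ((m + 1 : ℕ) : ℤ) - k)) * (qbin (T 1) (m + 1 : ℕ) (k - j) * qbin (T 1) n j) =
        T (j * (j + (m : ℤ) - (k - 1))) * (qbin (T 1) m ((k - 1) - j) * qbin (T 1) n j) +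
        T k * (T (j * (j + (m : ℤ) - k)) * (qbin (T 1) m (k - j) * qbin (T 1) n j)) := by
      intro j _
      rw [qbin_pascal m (k - j)]
      have e1 : j * (j + ((m + 1 : ℕ) : ℤ) - k) = j * (j + (m : ℤ) - (k - 1)) := by
        push_cast; ring
      have e2 : k - j - 1 = k - 1 - j := by ring
      have e3 : (T (j * (j + ((m + 1 : ℕ) : ℤ) - k)) * T (k - j) : LaurentPolynomial ℤ) =
          T k * T (j * (j + (m : ℤ) - k)) := by
        rw [← T_add, ← T_add]
        congr 1
        push_cast
        ring
      calc T (j * (j + ((m + 1 : ℕ) : ℤ) - k)) *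
            ((qbin (T 1) m (k - j - 1) + T (k - j) * qbin (T 1) m (k - j)) * qbin (T 1) n j)
          = T (j * (j + ((m + 1 : ℕ) : ℤ) - k)) * (qbin (T 1) m (k - j - 1) * qbin (T 1) n j) +
            (T (j * (j + ((m + 1 : ℕ) : ℤ) - k)) * T (k - j)) *
              (qbin (T 1) m (k - j) * qbin (T 1) n j) := by ring
        _ = _ := by rw [e3, e1, e2]; ring
    rw [Finset.sum_congr rfl hsplit, Finset.sum_add_distrib, ih (k - 1), ← Finset.mul_sum, ih k]
    have hp := qbin_pascal (m + n) k
    rw [show ((m + n + 1 : ℕ) : ℤ) = ((m + 1 : ℕ) : ℤ) + (n : ℤ) by push_cast; ring] at hp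
    rw [show ((m + n : ℕ) : ℤ) = ((m : ℕ) : ℤ) + (n : ℤ) by push_cast; ring] at hp
    exact hp.symm

/-- The key linearization identity. -/
lemma key (L : ℕ) (a j : ℤ) :
    ∑ k ∈ Finset.Icc (0 : ℤ) (L : ℤ),
        T (k ^ 2) * (qbin (T 1) L (k - a) * qbin (T 1) ((L : ℤ) - k + a) (k + a) *
          qbin (T 1) ((L : ℤ) - 2 * k) (j - k)) =
      T (a ^ 2) * (qbin (T 1) L (j - a) * qbin (T 1) L (j + a)) := by
  by_cases hM : 0 ≤ j - a ∧ j - a ≤ (L : ℤ)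
  · obtain ⟨hM0, hM1⟩ := hM
    set Mn := (j - a).toNat with hMndef
    have hMn : (Mn : ℤ) = j - a := by omega
    have hLM : ((L - Mn : ℕ) : ℤ) = (L : ℤ) - j + a := by omega
    have hv := vand Mn (L - Mn) (j + a)
    simp only [hMn, hLM] at hv
    rw [show j - a + ((L : ℤ) - j + a) = (L : ℤ) from by ring] at hv
    calc ∑ k ∈ Finset.Icc (0 : ℤ) (L : ℤ),
          T (k ^ 2) * (qbin (T 1) L (k - a) * qbin (T 1) ((L : ℤ) - k + a) (k + a) *
            qbin (T 1) ((L : ℤ) - 2 * k) (j - k))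
        = ∑ x ∈ Finset.Icc (0 : ℤ) (L : ℤ), T (a ^ 2) *
            (qbin (T 1) L (j - a) * (T ((x + a) * ((x + a) + (j - a) - (j + a))) *
              (qbin (T 1) (j - a) (j + a - (x + a)) * qbin (T 1) ((L : ℤ) - j + a) (x + a)))) := by
          refine Finset.sum_congr rfl fun x _ => ?_
          have hT : (T (a ^ 2) * T ((x + a) * ((x + a) + (j - a) - (j + a)))
              : LaurentPolynomial ℤ) = T (x ^ 2) := by
            rw [← T_add]; congr 1; ring
          calc T (x ^ 2) * (qbin (T 1) L (x - a) * qbin (T 1) ((L : ℤ) - x + a) (x + a) *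
                qbin (T 1) ((L : ℤ) - 2 * x) (j - x))
              = T (x ^ 2) * (qbin (T 1) L (j - a) * qbin (T 1) (j - a) (j - x) *
                qbin (T 1) ((L : ℤ) - j + a) (x + a)) := by rw [P2 (L : ℤ) j x a]
            _ = _ := by
                rw [show j + a - (x + a) = j - x from by ring, ← hT]
                ring
      _ = ∑ x ∈ Finset.Icc (-a) ((L : ℤ) - j), T (a ^ 2) *
            (qbin (T 1) L (j - a) * (T ((x + a) * ((x + a) + (j - a) - (j + a))) *
              (qbin (T 1) (j - a) (j + a - (x + a)) * qbin (T 1) ((L : ℤ) - j + a) (x + a)))) := by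
          apply sum_ext_zero
          · intro x hx hnx
            rw [Finset.mem_Icc] at hx
            rw [Finset.mem_Icc] at hnx
            push_neg at hnx
            rcases lt_or_ge x (-a) with hc | hc
            · rw [qbin_neg_right (show x + a < 0 from by omega)]
              ring
            · rw [qbin_eq_zero_of_lt (show (L : ℤ) - j + a < x + a from by omega)]
              ring
          · intro x hx hnx
            rw [Finset.mem_Icc] at hx
            rw [Finset.mem_Icc] at hnx
            push_neg at hnx
            rcases lt_or_ge x 0 with hc | hc
            · rcases lt_or_ge x a with hc2 | hc2
              · rw [qbin_eq_zero_of_lt (show j - a < j + a - (x + a) from by omega)]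
                ring
              · rw [qbin_neg_right (show x + a < 0 from by omega)]
                ring
            · have hxL : (L : ℤ) < x := hnx hc
              rcases lt_or_ge (j - x) 0 with hc2 | hc2
              · rw [qbin_neg_right (show j + a - (x + a) < 0 from by omega)]
                ring
              · rw [qbin_eq_zero_of_lt (show (L : ℤ) - j + a < x + a from by omega)]
                ring
      _ = ∑ s ∈ Finset.Icc (0 : ℤ) ((L : ℤ) - j + a), T (a ^ 2) *
            (qbin (T 1) L (j - a) * (T (s * (s + (j - a) - (j + a))) *
              (qbin (T 1) (j - a) (j + a - s) * qbin (T 1) ((L : ℤ) - j + a) s))) := by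
          rw [sum_shift (fun s => T (a ^ 2) *
            (qbin (T 1) L (j - a) * (T (s * (s + (j - a) - (j + a))) *
              (qbin (T 1) (j - a) (j + a - s) * qbin (T 1) ((L : ℤ) - j + a) s))))
            0 ((L : ℤ) - j + a) a]
          rw [show (0 : ℤ) - a = -a from by ring, show (L : ℤ) - j + a - a = (L : ℤ) - j from by ring]
      _ = T (a ^ 2) * (qbin (T 1) L (j - a) * qbin (T 1) L (j + a)) := by
          rw [← hv, Finset.mul_sum, Finset.mul_sum]
  · rw [show (qbin (T 1) (L : ℤ) (j - a) : LaurentPolynomial ℤ) = 0 from by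
        rcases lt_or_ge (j - a) 0 with hc | hc
        · exact qbin_neg_right hc
        · exact qbin_eq_zero_of_lt (by omega)]
    rw [zero_mul, mul_zero]
    apply Finset.sum_eq_zero
    intro k hk
    rw [Finset.mem_Icc] at hk
    rcases lt_or_ge (j - a) 0 with hc | hc
    · rcases lt_or_ge (k - a) 0 with hc2 | hc2
      · rw [qbin_neg_right hc2]
        ring
      · rw [qbin_neg_right (show j - k < 0 from by omega)]
        ring
    · have hgt : (L : ℤ) < j - a := by
        by_contra hcon; push_neg at hcon; exact hM ⟨hc, hcon⟩
      rcases lt_or_ge (k + a) 0 with hc2 | hc2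
      · rw [qbin_neg_right hc2]
        ring
      · rw [qbin_eq_zero_of_lt (show (L : ℤ) - 2 * k < j - k from by omega)]
        ring

/-- Final Vandermonde step. -/
lemma stepD (L : ℕ) (a : ℤ) :
    ∑ j ∈ Finset.Icc (0 : ℤ) (2 * (L : ℤ)),
        T (j ^ 2 + a ^ 2) * (qbin (T 1) L (j - a) * qbin (T 1) L (j + a)) =
      T (2 * a ^ 2) * qbin (T 1) (2 * (L : ℤ)) ((L : ℤ) - 2 * a) := by
  have hv := vand L L ((L : ℤ) - 2 * a)
  have hsym : ∀ s ∈ Finset.Icc (0 : ℤ) (L : ℤ),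
      T (s * (s + (L : ℤ) - ((L : ℤ) - 2 * a))) *
        (qbin (T 1) L ((L : ℤ) - 2 * a - s) * qbin (T 1) L s) =
      T (s * (s + (L : ℤ) - ((L : ℤ) - 2 * a))) *
        (qbin (T 1) L (s + 2 * a) * qbin (T 1) L s) := by
    intro s _
    rw [qbin_symm (by positivity) ((L : ℤ) - 2 * a - s),
      show (L : ℤ) - ((L : ℤ) - 2 * a - s) = s + 2 * a from by ring]
  rw [Finset.sum_congr rfl hsym] at hv
  calc ∑ j ∈ Finset.Icc (0 : ℤ) (2 * (L : ℤ)),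
        T (j ^ 2 + a ^ 2) * (qbin (T 1) L (j - a) * qbin (T 1) L (j + a))
      = ∑ x ∈ Finset.Icc (-a) (2 * (L : ℤ) - a),
          T ((x + a) ^ 2 + a ^ 2) * (qbin (T 1) L x * qbin (T 1) L (x + 2 * a)) := by
        rw [sum_shift (fun j => T (j ^ 2 + a ^ 2) *
            (qbin (T 1) L (j - a) * qbin (T 1) L (j + a))) 0 (2 * (L : ℤ)) a,
          show (0 : ℤ) - a = -a from by ring]
        refine Finset.sum_congr rfl fun x _ => ?_
        rw [show x + a - a = x from by ring, show x + a + a = x + 2 * a from by ring]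
    _ = ∑ x ∈ Finset.Icc (0 : ℤ) (L : ℤ),
          T ((x + a) ^ 2 + a ^ 2) * (qbin (T 1) L x * qbin (T 1) L (x + 2 * a)) := by
        apply sum_ext_zero
        · intro x hx hnx
          rw [Finset.mem_Icc] at hx
          rw [Finset.mem_Icc] at hnx
          push_neg at hnx
          rcases lt_or_ge x 0 with hc | hc
          · rw [qbin_neg_right hc]; ring
          · rw [qbin_eq_zero_of_lt (show (L : ℤ) < x from (by omega))]; ring
        · intro x hx hnx
          rw [Finset.mem_Icc] at hx
          rw [Finset.mem_Icc] at hnx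
          push_neg at hnx
          rcases lt_or_ge x (-a) with hc | hc
          · rw [qbin_neg_right (show x + 2 * a < 0 from by omega)]; ring
          · rw [qbin_eq_zero_of_lt (show (L : ℤ) < x + 2 * a from by omega)]; ring
    _ = T (2 * a ^ 2) * qbin (T 1) (2 * (L : ℤ)) ((L : ℤ) - 2 * a) := by
        rw [show (2 * (L : ℤ)) = (L : ℤ) + (L : ℤ) from by ring, ← hv, Finset.mul_sum]
        refine Finset.sum_congr rfl fun s hs => ?_
        have hT : (T (2 * a ^ 2) * T (s * (s + (L : ℤ) - ((L : ℤ) - 2 * a)))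
            : LaurentPolynomial ℤ) = T ((s + a) ^ 2 + a ^ 2) := by
          rw [← T_add]; congr 1; ring
        rw [← hT]
        ring

lemma sum_range_cast (f : ℤ → LaurentPolynomial ℤ) (n : ℕ) :
    ∑ m ∈ Finset.range (n + 1), f (m : ℤ) = ∑ m ∈ Finset.Icc (0 : ℤ) (n : ℤ), f m := by
  rw [show Finset.Icc (0 : ℤ) (n : ℤ) =
      (Finset.range (n + 1)).map ⟨Nat.cast, Nat.cast_injective⟩ from ?_, Finset.sum_map]
  · rfl
  · ext x
    simp only [Finset.mem_Icc, Finset.mem_map, Finset.mem_range, Function.Embedding.coeFn_mk]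
    constructor
    · rintro ⟨h0, h1⟩
      exact ⟨x.toNat, by omega, by omega⟩
    · rintro ⟨m, hm, rfl⟩
      constructor <;> omega

theorem stmt17 (L : ℕ) (a : ℤ) :
    (∑ᶠ k : ℕ,
        (∑ m ∈ Finset.range (L + 1),
            T (((m : ℤ) + k) ^ 2 + (k : ℤ) ^ 2) *
              qbin (T 1) L m * qbin (T 1) ((L : ℤ) - m) (2 * k)) *
          qbin (T 1) (2 * (k : ℤ)) ((k : ℤ) - a)) =
      T (2 * a ^ 2) * qbin (T 1) (2 * L) ((L : ℤ) - 2 * a) := by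
  have hfin : (∑ᶠ k : ℕ,
      (∑ m ∈ Finset.range (L + 1),
          T (((m : ℤ) + k) ^ 2 + (k : ℤ) ^ 2) *
            qbin (T 1) L m * qbin (T 1) ((L : ℤ) - m) (2 * k)) *
        qbin (T 1) (2 * (k : ℤ)) ((k : ℤ) - a)) =
      ∑ k ∈ Finset.range (L + 1),
        (∑ m ∈ Finset.range (L + 1),
            T (((m : ℤ) + k) ^ 2 + (k : ℤ) ^ 2) *
              qbin (T 1) L m * qbin (T 1) ((L : ℤ) - m) (2 * k)) *
          qbin (T 1) (2 * (k : ℤ)) ((k : ℤ) - a) := by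
    apply finsum_eq_sum_of_support_subset
    intro k hk
    simp only [Function.mem_support, ne_eq] at hk
    by_contra hnk
    apply hk
    rw [Finset.mem_coe, Finset.mem_range] at hnk
    push_neg at hnk
    have hz : ∑ m ∈ Finset.range (L + 1),
        T (((m : ℤ) + k) ^ 2 + (k : ℤ) ^ 2) *
          qbin (T 1) L m * qbin (T 1) ((L : ℤ) - m) (2 * k) = 0 := by
      apply Finset.sum_eq_zero
      intro m hm
      rw [Finset.mem_range] at hm
      rw [qbin_eq_zero_of_lt (show (L : ℤ) - (m : ℤ) < 2 * (k : ℤ) from by omega), mul_zero]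
    rw [hz, zero_mul]
  rw [hfin]
  have hk1 : ∀ k : ℤ,
      (∑ m ∈ Finset.range (L + 1),
          T (((m : ℤ) + k) ^ 2 + k ^ 2) *
            qbin (T 1) L m * qbin (T 1) ((L : ℤ) - m) (2 * k)) =
      ∑ m ∈ Finset.Icc (0 : ℤ) (L : ℤ),
          T ((m + k) ^ 2 + k ^ 2) * qbin (T 1) L m * qbin (T 1) ((L : ℤ) - m) (2 * k) :=
    fun k => sum_range_cast (fun m => T ((m + k) ^ 2 + k ^ 2) *
      qbin (T 1) L m * qbin (T 1) ((L : ℤ) - m) (2 * k)) L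
  calc ∑ k ∈ Finset.range (L + 1),
        (∑ m ∈ Finset.range (L + 1),
            T (((m : ℤ) + k) ^ 2 + (k : ℤ) ^ 2) *
              qbin (T 1) L m * qbin (T 1) ((L : ℤ) - m) (2 * k)) *
          qbin (T 1) (2 * (k : ℤ)) ((k : ℤ) - a)
      = ∑ k ∈ Finset.Icc (0 : ℤ) (L : ℤ),
          (∑ m ∈ Finset.Icc (0 : ℤ) (L : ℤ),
            T ((m + k) ^ 2 + k ^ 2) * qbin (T 1) L m * qbin (T 1) ((L : ℤ) - m) (2 * k)) *
          qbin (T 1) (2 * k) (k - a) := by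
        rw [← sum_range_cast (fun k => (∑ m ∈ Finset.Icc (0 : ℤ) (L : ℤ),
          T ((m + k) ^ 2 + k ^ 2) * qbin (T 1) L m * qbin (T 1) ((L : ℤ) - m) (2 * k)) *
          qbin (T 1) (2 * k) (k - a)) L]
        exact Finset.sum_congr rfl fun k _ => by rw [hk1 (k : ℤ)]
    _ = ∑ k ∈ Finset.Icc (0 : ℤ) (L : ℤ), ∑ j ∈ Finset.Icc (0 : ℤ) (2 * (L : ℤ)),
          T (j ^ 2) * (T (k ^ 2) * (qbin (T 1) L (k - a) *
            qbin (T 1) ((L : ℤ) - k + a) (k + a) * qbin (T 1) ((L : ℤ) - 2 * k) (j - k))) := by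
        refine Finset.sum_congr rfl fun k hk => ?_
        rw [Finset.mem_Icc] at hk
        rw [Finset.sum_mul]
        have h1 : ∀ m ∈ Finset.Icc (0 : ℤ) (L : ℤ),
            T ((m + k) ^ 2 + k ^ 2) * qbin (T 1) L m * qbin (T 1) ((L : ℤ) - m) (2 * k) *
              qbin (T 1) (2 * k) (k - a) =
            T ((m + k) ^ 2 + k ^ 2) * (qbin (T 1) L (k - a) *
              qbin (T 1) ((L : ℤ) - k + a) (k + a) * qbin (T 1) ((L : ℤ) - 2 * k) m) := by
          intro m _
          rw [show T ((m + k) ^ 2 + k ^ 2) * qbin (T 1) L m * qbin (T 1) ((L : ℤ) - m) (2 * k) *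
              qbin (T 1) (2 * k) (k - a) =
            T ((m + k) ^ 2 + k ^ 2) * (qbin (T 1) L m * qbin (T 1) ((L : ℤ) - m) (2 * k) *
              qbin (T 1) (2 * k) (k - a)) from by ring, P1 (L : ℤ) m k a]
        rw [Finset.sum_congr rfl h1]
        have e1 : ∑ m ∈ Finset.Icc (0 : ℤ) (L : ℤ),
            T ((m + k) ^ 2 + k ^ 2) * (qbin (T 1) L (k - a) *
              qbin (T 1) ((L : ℤ) - k + a) (k + a) * qbin (T 1) ((L : ℤ) - 2 * k) m) =
            ∑ j ∈ Finset.Icc k ((L : ℤ) + k),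
            T ((j - k + k) ^ 2 + k ^ 2) * (qbin (T 1) L (k - a) *
              qbin (T 1) ((L : ℤ) - k + a) (k + a) * qbin (T 1) ((L : ℤ) - 2 * k) (j - k)) := by
          rw [sum_shift (fun j => T ((j - k + k) ^ 2 + k ^ 2) * (qbin (T 1) L (k - a) *
            qbin (T 1) ((L : ℤ) - k + a) (k + a) * qbin (T 1) ((L : ℤ) - 2 * k) (j - k)))
            k ((L : ℤ) + k) k,
            show k - k = (0 : ℤ) from by ring, show (L : ℤ) + k - k = (L : ℤ) from by ring]
          exact Finset.sum_congr rfl fun x _ => by rw [show x + k - k = x from by ring]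
        rw [e1]
        have e2 : ∑ j ∈ Finset.Icc k ((L : ℤ) + k),
            T ((j - k + k) ^ 2 + k ^ 2) * (qbin (T 1) L (k - a) *
              qbin (T 1) ((L : ℤ) - k + a) (k + a) * qbin (T 1) ((L : ℤ) - 2 * k) (j - k)) =
            ∑ j ∈ Finset.Icc (0 : ℤ) (2 * (L : ℤ)),
            T ((j - k + k) ^ 2 + k ^ 2) * (qbin (T 1) L (k - a) *
              qbin (T 1) ((L : ℤ) - k + a) (k + a) * qbin (T 1) ((L : ℤ) - 2 * k) (j - k)) := by
          apply Finset.sum_subset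
          · intro x hx
            rw [Finset.mem_Icc] at hx ⊢
            omega
          · intro x hx hnx
            rw [Finset.mem_Icc] at hx
            rw [Finset.mem_Icc] at hnx
            push_neg at hnx
            rcases lt_or_ge (x - k) 0 with hc | hc
            · rw [qbin_neg_right hc]
              ring
            · rw [qbin_eq_zero_of_lt (show (L : ℤ) - 2 * k < x - k from by omega)]
              ring
        rw [e2]
        refine Finset.sum_congr rfl fun j _ => ?_
        have hT : (T ((j - k + k) ^ 2 + k ^ 2) : LaurentPolynomial ℤ) =
            T (j ^ 2) * T (k ^ 2) := by
          rw [← T_add]; congr 1; ring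
        rw [hT]
        ring
    _ = T (2 * a ^ 2) * qbin (T 1) (2 * L) ((L : ℤ) - 2 * a) := by
        rw [Finset.sum_comm]
        have h2 : ∀ j ∈ Finset.Icc (0 : ℤ) (2 * (L : ℤ)),
            (∑ k ∈ Finset.Icc (0 : ℤ) (L : ℤ),
              T (j ^ 2) * (T (k ^ 2) * (qbin (T 1) L (k - a) *
                qbin (T 1) ((L : ℤ) - k + a) (k + a) * qbin (T 1) ((L : ℤ) - 2 * k) (j - k)))) =
            T (j ^ 2 + a ^ 2) * (qbin (T 1) L (j - a) * qbin (T 1) L (j + a)) := by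
          intro j _
          rw [← Finset.mul_sum, key L a j, ← mul_assoc, ← T_add]
        rw [Finset.sum_congr rfl h2, stepD L a]
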